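/- With the α-twisted operations on T(G,A,α), the compatibility Q(m(a,b,c)) = m(Q(a),Q(c),Q(b)) holds for all admissible triples if and only if g·α(g^{-1}h, h^{-1}k, k^{-1}) = -α(h, h^{-1}k, k^{-1}g) for all g,h,k ∈ G. -/
import Mathlib


variable {G A : Type} [Group G] [AddCommGroup A] [DistribMulAction G A]

/-- `m((a,(g,h⁻¹)),(b,(h,k⁻¹)),(c,(h⁻¹g,k⁻¹h))) =
  (a + (g⁻¹h)b + c + α(g⁻¹h,h⁻¹k,k⁻¹), (g,k⁻¹))` in `T(G,A,α)`. -/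
def mTw (α : G → G → G → A) (g h k : G) (a b c : A) : A :=
  a + (g⁻¹ * h) • b + c + α (g⁻¹ * h) (h⁻¹ * k) k⁻¹

/-- `Q((a,(g,h⁻¹))) = (-(g•a), (g⁻¹,h⁻¹g))`. -/
def qTw (g : G) (a : A) : A := -(g • a)

/-- The compatibility `Q(m(a,b,c)) = m(Q(a),Q(c),Q(b))` holds in `T(G,A,α)` if and only if
`g•α(g⁻¹h, h⁻¹k, k⁻¹) = -α(h, h⁻¹k, k⁻¹g)` for all `g,h,k ∈ G`. -/
theorem Q_compat_iff (α : G → G → G → A) :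
    (∀ (g h k : G) (a b c : A),
        qTw g (mTw α g h k a b c) =
          mTw α g⁻¹ (g⁻¹ * h) (g⁻¹ * k) (qTw g a) (qTw (h⁻¹ * g) c) (qTw h b)) ↔
      (∀ g h k : G, g • α (g⁻¹ * h) (h⁻¹ * k) k⁻¹ = -α h (h⁻¹ * k) (k⁻¹ * g)) := by
  constructor
  · intro H g h k
    have := H g h k 0 0 0
    simp only [mTw, qTw, smul_zero, neg_zero, zero_add, add_zero, smul_neg,
      smul_smul, mul_inv_rev, inv_inv] at this
    rw [show g * (g⁻¹ * h) = h by group, show h⁻¹ * g * (g⁻¹ * k) = h⁻¹ * k by group] at this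
    exact neg_eq_iff_eq_neg.mp this
  · intro H g h k a b c
    simp only [mTw, qTw, smul_neg, smul_smul, smul_add]
    rw [show g⁻¹⁻¹ * (g⁻¹ * h) = h by group, show (g⁻¹ * h)⁻¹ * (g⁻¹ * k) = h⁻¹ * k by group,
      show (g⁻¹ * k)⁻¹ = k⁻¹ * g by group, show h * (h⁻¹ * g) = g by group,
      show g * (g⁻¹ * h) = h by group, H g h k]
    abel
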